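/- Let G be a graph with maximum degree Δ and let c be a proper k-edge-colouring of G with k ≥ Δ + 1. Then there exists a proper edge-colouring c′ of G using at most Δ + 1 colours such that c and c′ are Kempe equivalent as k-edge-colourings. -/

import Mathlib

/-!
Call a colour low if it is at most `Δ` and high otherwise; high edges are removed one at a
time by Vizing's fan argument, carried out with Kempe changes only. Given an edge `u v₀` of
high colour `h`, grow a fan `u v₀, …, v_q` whose spokes `u vᵢ` have distinct low colours `aᵢ`,
with `aᵢ₊₁` missing at `vᵢ`. Rotating the fan is done by the Kempe changes `(h, aᵢ)` at
`vᵢ₋₁`; none of them creates high edges, since that chain is a path leaving `vᵢ₋₁` through an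
`h`-edge and so has at least as many `h`-edges as `aᵢ`-edges. Once `u v_q` carries `h` and a low
colour `γ` is missing at both `u` and `v_q`, the `(h, γ)`-chain is the single edge `u v_q`, and
swapping it removes a high edge. If the low colour missing at `v_q` is new, the fan grows. If
it is some `a_s`, take `β` missing at `u`: a `(β, a_s)`-chain has at most two ends, so it cannot
contain all of `u`, `v_{s-1}` and `v_q`, and a `(β, a_s)`-change at `v_{s-1}` or at `v_q` frees
`β` at the end of the fan cut off at that vertex.
-/

open SimpleGraph

/-- A proper `k`-edge-colouring of `G`: distinct edges sharing a vertex receive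
different colours. -/
def IsProperEdgeColoring {V : Type*} (G : SimpleGraph V) (k : ℕ)
    (φ : G.edgeSet → Fin k) : Prop :=
  ∀ e₁ e₂ : G.edgeSet, e₁ ≠ e₂ →
    (∃ v : V, v ∈ (e₁ : Sym2 V) ∧ v ∈ (e₂ : Sym2 V)) → φ e₁ ≠ φ e₂

/-- The spanning subgraph of `G` consisting of the edges coloured `a` or `b` under `φ`. -/
def kempeGraph {V : Type*} (G : SimpleGraph V) {k : ℕ} (φ : G.edgeSet → Fin k)
    (a b : Fin k) : SimpleGraph V where
  Adj u v := ∃ h : G.Adj u v, φ ⟨s(u, v), h⟩ = a ∨ φ ⟨s(u, v), h⟩ = b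
  symm := by
    constructor
    rintro u v ⟨h, hc⟩
    refine ⟨h.symm, ?_⟩
    have he : (⟨s(v, u), h.symm⟩ : G.edgeSet) = ⟨s(u, v), h⟩ :=
      Subtype.ext (Sym2.eq_swap)
    rw [he]
    exact hc
  loopless := by
    constructor
    rintro v ⟨h, _⟩
    exact G.loopless.irrefl v h

/-- The edge `e` lies in the Kempe chain determined by the colours `a, b` and the
connected component of the vertex `w` in the `(a,b)`-subgraph. -/
def InKempeChain {V : Type*} (G : SimpleGraph V) {k : ℕ} (φ : G.edgeSet → Fin k)
    (a b : Fin k) (w : V) (e : G.edgeSet) : Prop :=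
  (φ e = a ∨ φ e = b) ∧ ∃ u ∈ (e : Sym2 V), (kempeGraph G φ a b).Reachable w u

/-- `ψ` is obtained from `φ` by a single Kempe change: the colours `a` and `b` are
swapped on one connected component of the subgraph induced by the edges coloured
`a` or `b`, and all other edges keep their colour. -/
def KempeChange {V : Type*} (G : SimpleGraph V) (k : ℕ)
    (φ ψ : G.edgeSet → Fin k) : Prop :=
  ∃ (a b : Fin k) (w : V), ∀ e : G.edgeSet,
    (InKempeChain G φ a b w e → ψ e = Equiv.swap a b (φ e)) ∧
    (¬ InKempeChain G φ a b w e → ψ e = φ e)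

/-- Kempe equivalence: `ψ` is obtained from `φ` by a finite sequence of Kempe changes. -/
def KempeEquiv {V : Type*} (G : SimpleGraph V) (k : ℕ)
    (φ ψ : G.edgeSet → Fin k) : Prop :=
  Relation.ReflTransGen (KempeChange G k) φ ψ

open Finset

section Colouring

variable {V : Type*} {G : SimpleGraph V} {k : ℕ} {φ : G.edgeSet → Fin k}

def EdgeHasColour (φ : G.edgeSet → Fin k) (u v : V) (c : Fin k) : Prop :=
  ∃ h : G.Adj u v, φ ⟨s(u, v), h⟩ = c

def HasColour (φ : G.edgeSet → Fin k) (u : V) (c : Fin k) : Prop :=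
  ∃ v, EdgeHasColour φ u v c

theorem EdgeHasColour.symm {u v : V} {c : Fin k} (h : EdgeHasColour φ u v c) :
    EdgeHasColour φ v u c := by
  obtain ⟨huv, rfl⟩ := h
  exact ⟨huv.symm, congrArg φ (Subtype.ext Sym2.eq_swap)⟩

theorem EdgeHasColour.unique {u v : V} {c c' : Fin k} (h : EdgeHasColour φ u v c)
    (h' : EdgeHasColour φ u v c') : c = c' := by
  obtain ⟨_, rfl⟩ := h
  obtain ⟨_, rfl⟩ := h'
  rfl

theorem EdgeHasColour.hasColour {u v : V} {c : Fin k} (h : EdgeHasColour φ u v c) :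
    HasColour φ u c :=
  ⟨v, h⟩

theorem hasColour_iff_exists_mem {u : V} {c : Fin k} :
    HasColour φ u c ↔ ∃ e : G.edgeSet, u ∈ (e : Sym2 V) ∧ φ e = c := by
  constructor
  · rintro ⟨v, huv, rfl⟩
    exact ⟨_, Sym2.mem_mk_left u v, rfl⟩
  · rintro ⟨⟨e, he⟩, hu, rfl⟩
    obtain ⟨v, rfl⟩ := Sym2.mem_iff_exists.mp hu
    exact ⟨v, he, rfl⟩

theorem kempeGraph_adj_iff {a b : Fin k} {u v : V} :
    (kempeGraph G φ a b).Adj u v ↔ EdgeHasColour φ u v a ∨ EdgeHasColour φ u v b := by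
  simp only [kempeGraph, EdgeHasColour, exists_or]

theorem IsProperEdgeColoring.eq_of_edgeHasColour (hφ : IsProperEdgeColoring G k φ)
    {u v₁ v₂ : V} {c : Fin k} (h₁ : EdgeHasColour φ u v₁ c)
    (h₂ : EdgeHasColour φ u v₂ c) : v₁ = v₂ := by
  obtain ⟨h₁, hc₁⟩ := h₁
  obtain ⟨h₂, hc₂⟩ := h₂
  by_contra hne
  refine hφ _ _ (fun he => hne ?_) ⟨u, Sym2.mem_mk_left u v₁, Sym2.mem_mk_left u v₂⟩
    (hc₁.trans hc₂.symm)
  exact Sym2.congr_right.mp (congrArg Subtype.val he)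

theorem IsProperEdgeColoring.eq_of_mem_of_mem (hφ : IsProperEdgeColoring G k φ)
    {e₁ e₂ : G.edgeSet} {u : V} (h₁ : u ∈ (e₁ : Sym2 V)) (h₂ : u ∈ (e₂ : Sym2 V))
    (hc : φ e₁ = φ e₂) : e₁ = e₂ := by
  by_contra hne
  exact hφ e₁ e₂ hne ⟨u, h₁, h₂⟩ hc

theorem SimpleGraph.Reachable.mem_of_forall_adj_mem {K : SimpleGraph V} {S : Set V}
    (hS : ∀ x ∈ S, ∀ y, K.Adj x y → y ∈ S) {x y : V} (hx : x ∈ S)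
    (hxy : K.Reachable x y) : y ∈ S := by
  rw [reachable_iff_reflTransGen] at hxy
  induction hxy with
  | refl => exact hx
  | tail _ hyz ih => exact hS _ ih _ hyz

end Colouring

section KempeSwap

variable {V : Type*} {G : SimpleGraph V} {k : ℕ} {φ ψ : G.edgeSet → Fin k} {a b c : Fin k}
  {w y : V} {e : G.edgeSet}

open Classical in
noncomputable def kempeSwap (φ : G.edgeSet → Fin k) (a b : Fin k) (w : V) :
    G.edgeSet → Fin k :=
  fun e => if InKempeChain G φ a b w e then Equiv.swap a b (φ e) else φ e

theorem kempeChange_kempeSwap : KempeChange G k φ (kempeSwap φ a b w) :=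
  ⟨a, b, w, fun _ => ⟨fun h => if_pos h, fun h => if_neg h⟩⟩

theorem KempeChange.exists_eq_kempeSwap (h : KempeChange G k φ ψ) :
    ∃ a b w, ψ = kempeSwap φ a b w := by
  obtain ⟨a, b, w, h⟩ := h
  refine ⟨a, b, w, funext fun e => ?_⟩
  by_cases he : InKempeChain G φ a b w e
  · rw [(h e).1 he, kempeSwap, if_pos he]
  · rw [(h e).2 he, kempeSwap, if_neg he]

theorem kempeSwap_of_inKempeChain (he : InKempeChain G φ a b w e) :
    kempeSwap φ a b w e = Equiv.swap a b (φ e) :=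
  if_pos he

theorem kempeSwap_of_not_inKempeChain (he : ¬ InKempeChain G φ a b w e) :
    kempeSwap φ a b w e = φ e :=
  if_neg he

theorem InKempeChain.reachable (he : InKempeChain G φ a b w e) (hy : y ∈ (e : Sym2 V)) :
    (kempeGraph G φ a b).Reachable w y := by
  obtain ⟨hc, z, hz, hwz⟩ := he
  obtain ⟨x, hzx⟩ := Sym2.mem_iff_exists.mp hz
  have hadj : (kempeGraph G φ a b).Adj z x := by
    obtain ⟨e, he⟩ := e
    subst hzx
    exact ⟨he, hc⟩
  rw [hzx, Sym2.mem_iff] at hy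
  rcases hy with rfl | rfl
  · exact hwz
  · exact hwz.trans hadj.reachable

theorem kempeSwap_of_not_reachable (hy : y ∈ (e : Sym2 V))
    (hwy : ¬ (kempeGraph G φ a b).Reachable w y) : kempeSwap φ a b w e = φ e :=
  kempeSwap_of_not_inKempeChain fun he => hwy (he.reachable hy)

theorem kempeSwap_cases (φ : G.edgeSet → Fin k) (a b : Fin k) (w : V) (e : G.edgeSet) :
    kempeSwap φ a b w e = φ e ∨ (φ e = a ∧ kempeSwap φ a b w e = b) ∨
      (φ e = b ∧ kempeSwap φ a b w e = a) := by
  by_cases he : InKempeChain G φ a b w e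
  · rw [kempeSwap_of_inKempeChain he]
    rcases he.1 with hc | hc
    · exact Or.inr (Or.inl ⟨hc, by rw [hc, Equiv.swap_apply_left]⟩)
    · exact Or.inr (Or.inr ⟨hc, by rw [hc, Equiv.swap_apply_right]⟩)
  · exact Or.inl (kempeSwap_of_not_inKempeChain he)

theorem kempeSwap_eq_iff_of_ne (ha : c ≠ a) (hb : c ≠ b) :
    kempeSwap φ a b w e = c ↔ φ e = c := by
  rcases kempeSwap_cases φ a b w e with h | ⟨h, h'⟩ | ⟨h, h'⟩
  · rw [h]
  · rw [h, h']; exact iff_of_false (Ne.symm hb) (Ne.symm ha)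
  · rw [h, h']; exact iff_of_false (Ne.symm ha) (Ne.symm hb)

theorem IsProperEdgeColoring.kempeSwap (hφ : IsProperEdgeColoring G k φ) (a b : Fin k) (w : V) :
    IsProperEdgeColoring G k (_root_.kempeSwap φ a b w) := by
  have mixed : ∀ e₁ e₂ : G.edgeSet, ∀ y ∈ (e₁ : Sym2 V), y ∈ (e₂ : Sym2 V) →
      InKempeChain G φ a b w e₁ → ¬ InKempeChain G φ a b w e₂ →
      _root_.kempeSwap φ a b w e₁ ≠ _root_.kempeSwap φ a b w e₂ := by
    intro e₁ e₂ y hy₁ hy₂ h₁ h₂ heq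
    rw [kempeSwap_of_inKempeChain h₁, kempeSwap_of_not_inKempeChain h₂] at heq
    refine h₂ ⟨?_, y, hy₂, h₁.reachable hy₁⟩
    rcases h₁.1 with hc | hc
    · rw [hc, Equiv.swap_apply_left] at heq; exact Or.inr heq.symm
    · rw [hc, Equiv.swap_apply_right] at heq; exact Or.inl heq.symm
  rintro e₁ e₂ hne ⟨y, hy₁, hy₂⟩ heq
  by_cases h₁ : InKempeChain G φ a b w e₁ <;> by_cases h₂ : InKempeChain G φ a b w e₂
  · rw [kempeSwap_of_inKempeChain h₁, kempeSwap_of_inKempeChain h₂] at heq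
    exact hφ e₁ e₂ hne ⟨y, hy₁, hy₂⟩ ((Equiv.swap a b).injective heq)
  · exact mixed e₁ e₂ y hy₁ hy₂ h₁ h₂ heq
  · exact mixed e₂ e₁ y hy₂ hy₁ h₂ h₁ heq.symm
  · rw [kempeSwap_of_not_inKempeChain h₁, kempeSwap_of_not_inKempeChain h₂] at heq
    exact hφ e₁ e₂ hne ⟨y, hy₁, hy₂⟩ heq

theorem IsProperEdgeColoring.of_kempeEquiv (hφ : IsProperEdgeColoring G k φ)
    (h : KempeEquiv G k φ ψ) : IsProperEdgeColoring G k ψ := by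
  induction h with
  | refl => exact hφ
  | tail _ hχ ih =>
    obtain ⟨a, b, w, rfl⟩ := hχ.exists_eq_kempeSwap
    exact ih.kempeSwap a b w

theorem EdgeHasColour.kempeSwap_of_not_reachable {x : V} (he : EdgeHasColour φ x y c)
    (hwx : ¬ (kempeGraph G φ a b).Reachable w x) : EdgeHasColour (kempeSwap φ a b w) x y c := by
  obtain ⟨hxy, rfl⟩ := he
  exact ⟨hxy, kempeSwap_of_not_reachable (Sym2.mem_mk_left x y) hwx⟩

theorem hasColour_kempeSwap_iff_of_not_reachable
    (hwy : ¬ (kempeGraph G φ a b).Reachable w y) :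
    HasColour (kempeSwap φ a b w) y c ↔ HasColour φ y c := by
  simp only [hasColour_iff_exists_mem]
  refine exists_congr fun e => and_congr_right fun hy => ?_
  rw [kempeSwap_of_not_reachable hy hwy]

theorem hasColour_kempeSwap_iff_of_ne (ha : c ≠ a) (hb : c ≠ b) :
    HasColour (kempeSwap φ a b w) y c ↔ HasColour φ y c := by
  simp only [hasColour_iff_exists_mem]
  refine exists_congr fun e => and_congr_right fun _ => kempeSwap_eq_iff_of_ne ha hb

theorem HasColour.of_kempeSwap (h : HasColour (kempeSwap φ a b w) y c) :
    c = a ∨ c = b ∨ HasColour φ y c := by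
  obtain ⟨e, hy, rfl⟩ := hasColour_iff_exists_mem.mp h
  rcases kempeSwap_cases φ a b w e with h | ⟨-, h⟩ | ⟨-, h⟩
  · exact Or.inr (Or.inr (hasColour_iff_exists_mem.mpr ⟨e, hy, h.symm⟩))
  · exact Or.inr (Or.inl h)
  · exact Or.inl h

theorem not_hasColour_kempeSwap_self (hab : a ≠ b) (hwb : ¬ HasColour φ w b) :
    ¬ HasColour (kempeSwap φ a b w) w a := by
  intro h
  obtain ⟨e, hw, he⟩ := hasColour_iff_exists_mem.mp h
  rcases kempeSwap_cases φ a b w e with h | ⟨-, h⟩ | ⟨h, -⟩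
  · have hφe : φ e = a := h.symm.trans he
    have hchain : InKempeChain G φ a b w e := ⟨Or.inl hφe, w, hw, Reachable.refl w⟩
    rw [kempeSwap_of_inKempeChain hchain, hφe, Equiv.swap_apply_left] at he
    exact hab he.symm
  · exact hab (he.symm.trans h)
  · exact hwb (hasColour_iff_exists_mem.mpr ⟨e, hw, h⟩)

theorem inKempeChain_iff_eq_of_not_hasColour (hφ : IsProperEdgeColoring G k φ) {u v : V}
    (huv : G.Adj u v) (hc : φ ⟨s(u, v), huv⟩ = a) (hu : ¬ HasColour φ u b)
    (hv : ¬ HasColour φ v b) : InKempeChain G φ a b u e ↔ e = ⟨s(u, v), huv⟩ := by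
  have huv_a : EdgeHasColour φ u v a := ⟨huv, hc⟩
  have hclosed : ∀ x ∈ ({u, v} : Set V), ∀ z, (kempeGraph G φ a b).Adj x z →
      z ∈ ({u, v} : Set V) := by
    rintro x (rfl | rfl) z hxz <;> rcases kempeGraph_adj_iff.mp hxz with hxz | hxz
    · exact Or.inr (hφ.eq_of_edgeHasColour hxz huv_a)
    · exact absurd hxz.hasColour hu
    · exact Or.inl (hφ.eq_of_edgeHasColour hxz huv_a.symm)
    · exact absurd hxz.hasColour hv
  constructor
  · rintro ⟨hab, z, hz, huz⟩
    have hz' : z = u ∨ z = v := huz.mem_of_forall_adj_mem hclosed (Set.mem_insert u _)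
    rcases hab with ha | hb
    · refine hφ.eq_of_mem_of_mem hz ?_ (ha.trans hc.symm)
      rcases hz' with rfl | rfl
      exacts [Sym2.mem_mk_left _ _, Sym2.mem_mk_right _ _]
    · rcases hz' with rfl | rfl
      exacts [absurd (hasColour_iff_exists_mem.mpr ⟨e, hz, hb⟩) hu,
        absurd (hasColour_iff_exists_mem.mpr ⟨e, hz, hb⟩) hv]
  · rintro rfl
    exact ⟨Or.inl hc, u, Sym2.mem_mk_left u v, Reachable.refl u⟩

end KempeSwap

theorem SimpleGraph.Connected.card_le_two_of_degree_le_two {W : Type*} [Fintype W]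
    {H : SimpleGraph W} [DecidableRel H.Adj] (hH : H.Connected) (hdeg : ∀ x, H.degree x ≤ 2)
    {S : Finset W} (hS : ∀ x ∈ S, H.degree x ≤ 1) : #S ≤ 2 := by
  classical
  have hedges : Fintype.card W ≤ #H.edgeFinset + 1 := by
    simpa only [Nat.card_eq_fintype_card, edgeFinset_card] using
      hH.card_vert_le_card_edgeSet_add_one
  have hsum : ∑ x, (H.degree x + if x ∈ S then 1 else 0) ≤ ∑ _x : W, 2 :=
    sum_le_sum fun x _ => by
      split_ifs with hx
      · linarith [hS x hx]
      · linarith [hdeg x]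
  rw [sum_add_distrib, sum_degrees_eq_twice_card_edges, sum_boole, filter_mem_eq_inter,
    univ_inter, Nat.cast_id, sum_const, card_univ, smul_eq_mul] at hsum
  omega

theorem SimpleGraph.card_le_two_of_reachable_of_degree_le_two {V : Type*} [Fintype V]
    {K : SimpleGraph V} [DecidableRel K.Adj] (hdeg : ∀ x, K.degree x ≤ 2) {w : V}
    {S : Finset V} (hS : ∀ x ∈ S, K.Reachable w x ∧ K.degree x ≤ 1) : #S ≤ 2 := by
  classical
  set C := K.connectedComponentMk w
  have hC : ∀ x ∈ S, x ∈ C := fun x hx =>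
    (ConnectedComponent.sound (hS x hx).1).symm
  have hdegC : ∀ x : C, C.toSimpleGraph.degree x = K.degree x := fun x => by
    convert degree_induce_of_neighborSet_subset (G := K) (s := C.supp) (v := x)
      fun y hy => C.mem_supp_of_adj_mem_supp x.2 hy
    exacts [Iff.rfl, rfl]
  have := C.connected_toSimpleGraph.card_le_two_of_degree_le_two
    (fun x => (hdegC x).trans_le (hdeg x)) (S := S.subtype (· ∈ C))
    (fun x hx => (hdegC x).trans_le (hS x (mem_subtype.mp hx)).2)
  rwa [card_subtype, filter_true_of_mem hC] at this

section KempeChains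

variable {V : Type*} [Fintype V] {G : SimpleGraph V} {k : ℕ} {φ : G.edgeSet → Fin k}
  {a b : Fin k}

open Classical in
theorem IsProperEdgeColoring.card_le_of_edgeHasColour (hφ : IsProperEdgeColoring G k φ)
    (x : V) (c : Fin k) :
    #{z | EdgeHasColour φ x z c} ≤ if HasColour φ x c then 1 else 0 := by
  split_ifs with hx
  · exact card_le_one.mpr fun z₁ h₁ z₂ h₂ =>
      hφ.eq_of_edgeHasColour (mem_filter.mp h₁).2 (mem_filter.mp h₂).2
  · exact (card_eq_zero.mpr (filter_eq_empty_iff.mpr fun z _ hz => hx hz.hasColour)).le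

open Classical in
theorem IsProperEdgeColoring.degree_kempeGraph_le (hφ : IsProperEdgeColoring G k φ) (x : V) :
    (kempeGraph G φ a b).degree x ≤
      (if HasColour φ x a then 1 else 0) + if HasColour φ x b then 1 else 0 := by
  have hsub : (kempeGraph G φ a b).neighborFinset x ⊆
      ({z | EdgeHasColour φ x z a} : Finset V) ∪ ({z | EdgeHasColour φ x z b} : Finset V) :=
    fun z hz => by
    rw [mem_neighborFinset, kempeGraph_adj_iff] at hz
    rw [filter_union_right, mem_filter]
    exact ⟨mem_univ z, hz⟩
  rw [← card_neighborFinset_eq_degree]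
  exact (card_le_card hsub).trans ((card_union_le _ _).trans
    (add_le_add (hφ.card_le_of_edgeHasColour x a) (hφ.card_le_of_edgeHasColour x b)))

theorem IsProperEdgeColoring.card_le_two_of_reachable_of_not_hasColour
    (hφ : IsProperEdgeColoring G k φ) {w : V} {S : Finset V}
    (hS : ∀ x ∈ S, (kempeGraph G φ a b).Reachable w x ∧
      (¬ HasColour φ x a ∨ ¬ HasColour φ x b)) :
    #S ≤ 2 := by
  classical
  refine card_le_two_of_reachable_of_degree_le_two (K := kempeGraph G φ a b) (w := w)
    (fun x => ?_) fun x hx => ?_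
  · have := hφ.degree_kempeGraph_le (a := a) (b := b) x
    split_ifs at this <;> omega
  · refine ⟨(hS x hx).1, ?_⟩
    have := hφ.degree_kempeGraph_le (a := a) (b := b) x
    rcases (hS x hx).2 with h | h <;> simp only [h, if_false] at this <;>
      split_ifs at this <;> omega

open Classical in
theorem IsProperEdgeColoring.card_reachable_hasColour (hφ : IsProperEdgeColoring G k φ)
    {w : V} {c : Fin k} (hc : c = a ∨ c = b) :
    #{x | (kempeGraph G φ a b).Reachable w x ∧ HasColour φ x c} =
      2 * #{e | φ e = c ∧ InKempeChain G φ a b w e} := by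
  rw [mul_comm, ← mul_one #{x | _}]
  refine card_mul_eq_card_mul (fun x (e : G.edgeSet) => x ∈ (e : Sym2 V)) ?_ ?_
  · intro x hx
    obtain ⟨hwx, hxc⟩ := (mem_filter.mp hx).2
    obtain ⟨e, hxe, rfl⟩ := hasColour_iff_exists_mem.mp hxc
    refine card_eq_one.mpr ⟨e, eq_singleton_iff_unique_mem.mpr ⟨?_, fun f hf => ?_⟩⟩
    · refine (mem_bipartiteAbove _).mpr
        ⟨mem_filter.mpr ⟨mem_univ _, rfl, hc.imp id id, x, hxe, hwx⟩, hxe⟩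
    · obtain ⟨hf, hxf⟩ := (mem_bipartiteAbove _).mp hf
      exact hφ.eq_of_mem_of_mem hxf hxe (mem_filter.mp hf).2.1
  · rintro ⟨e, he⟩ hmem
    obtain ⟨rfl, hchain⟩ := (mem_filter.mp hmem).2
    clear hmem
    induction e using Sym2.ind with
    | h p q =>
    have hpq : p ≠ q := G.ne_of_adj he
    rw [card_eq_two]
    refine ⟨p, q, hpq, ?_⟩
    ext x
    simp only [mem_bipartiteBelow, mem_filter, mem_univ, true_and, mem_insert, mem_singleton]
    constructor
    · exact fun ⟨_, hx⟩ => Sym2.mem_iff.mp hx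
    · rintro (rfl | rfl)
      · exact ⟨⟨hchain.reachable (Sym2.mem_mk_left _ _), q, he, rfl⟩, Sym2.mem_mk_left _ _⟩
      · exact ⟨⟨hchain.reachable (Sym2.mem_mk_right _ _),
          (EdgeHasColour.symm ⟨he, rfl⟩).hasColour⟩, Sym2.mem_mk_right _ _⟩

open Classical in
theorem IsProperEdgeColoring.card_inKempeChain_le (hφ : IsProperEdgeColoring G k φ) {w : V}
    (hwa : HasColour φ w a) (hwb : ¬ HasColour φ w b) :
    #{e | φ e = b ∧ InKempeChain G φ a b w e} ≤
      #{e | φ e = a ∧ InKempeChain G φ a b w e} := by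
  -- The chain vertices carrying `b` but not `a` are, like `w`, ends of the chain.
  have hA := hφ.card_reachable_hasColour (w := w) (Or.inl rfl : a = a ∨ a = b)
  have hB := hφ.card_reachable_hasColour (w := w) (Or.inr rfl : b = a ∨ b = b)
  set Va : Finset V := {x | (kempeGraph G φ a b).Reachable w x ∧ HasColour φ x a}
  set Vb : Finset V := {x | (kempeGraph G φ a b).Reachable w x ∧ HasColour φ x b}
  have hw : w ∈ Va \ Vb := by simp [Va, Vb, hwa, hwb]
  have hends : #(insert w (Vb \ Va)) ≤ 2 :=
    hφ.card_le_two_of_reachable_of_not_hasColour fun x hx => by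
      rcases mem_insert.mp hx with rfl | hx
      · exact ⟨Reachable.refl _, Or.inr hwb⟩
      · simp only [Va, Vb, mem_sdiff, mem_filter, mem_univ, true_and, not_and] at hx
        exact ⟨hx.1.1, Or.inl (hx.2 hx.1.1)⟩
  rw [card_insert_of_notMem fun h => (mem_sdiff.mp hw).2 (mem_sdiff.mp h).1] at hends
  have hVa := card_sdiff_add_card_inter Va Vb
  have hVb := card_sdiff_add_card_inter Vb Va
  have hw_pos := card_pos.mpr ⟨w, hw⟩
  rw [inter_comm] at hVb
  omega

end KempeChains

section HighEdges

variable {V : Type*} [Fintype V] {G : SimpleGraph V} [DecidableRel G.Adj] {k : ℕ}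
  {φ : G.edgeSet → Fin k} {a b : Fin k} {w : V}

theorem exists_lt_not_hasColour (hk : G.maxDegree + 1 ≤ k) (φ : G.edgeSet → Fin k) (y : V) :
    ∃ c : Fin k, (c : ℕ) < G.maxDegree + 1 ∧ ¬ HasColour φ y c := by
  classical
  set seen : Finset (Fin k) := (G.neighborFinset y).attach.image
    fun (z : {z // z ∈ G.neighborFinset y}) => φ ⟨s(y, z), (mem_neighborFinset G y z).mp z.2⟩
  have hseen : #seen < #(univ.map (Fin.castLEEmb hk)) := by
    rw [card_map, card_univ, Fintype.card_fin]
    calc #seen ≤ #(G.neighborFinset y).attach := card_image_le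
      _ = G.degree y := by rw [card_attach, card_neighborFinset_eq_degree]
      _ < G.maxDegree + 1 := Nat.lt_succ_of_le (G.degree_le_maxDegree y)
  obtain ⟨c, hc, hcs⟩ := exists_mem_notMem_of_card_lt_card hseen
  obtain ⟨c, -, rfl⟩ := mem_map.mp hc
  refine ⟨Fin.castLEEmb hk c, c.2, ?_⟩
  rintro ⟨z, hyz, hz⟩
  refine hcs (mem_image.mpr ?_)
  exact ⟨⟨z, (mem_neighborFinset G y z).mpr hyz⟩, mem_attach _ _, hz⟩

open Classical in
noncomputable def numHighEdges (φ : G.edgeSet → Fin k) : ℕ :=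
  #{e | G.maxDegree + 1 ≤ (φ e : ℕ)}

theorem numHighEdges_eq_zero_iff :
    numHighEdges φ = 0 ↔ ∀ e, (φ e : ℕ) < G.maxDegree + 1 := by
  simp [numHighEdges, filter_eq_empty_iff]

theorem numHighEdges_kempeSwap_of_lt (ha : (a : ℕ) < G.maxDegree + 1)
    (hb : (b : ℕ) < G.maxDegree + 1) : numHighEdges (kempeSwap φ a b w) = numHighEdges φ := by
  unfold numHighEdges
  congr 1
  refine filter_congr fun e _ => ?_
  rcases kempeSwap_cases φ a b w e with h | ⟨h, h'⟩ | ⟨h, h'⟩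
  · rw [h]
  · rw [h, h']; omega
  · rw [h, h']; omega

theorem numHighEdges_kempeSwap_lt_of_not_hasColour (hφ : IsProperEdgeColoring G k φ) {u v : V}
    (huv : G.Adj u v) (hc : φ ⟨s(u, v), huv⟩ = a) (hu : ¬ HasColour φ u b)
    (hv : ¬ HasColour φ v b) (ha : G.maxDegree + 1 ≤ (a : ℕ))
    (hb : (b : ℕ) < G.maxDegree + 1) : numHighEdges (kempeSwap φ a b u) < numHighEdges φ := by
  have hchain := fun e => inKempeChain_iff_eq_of_not_hasColour (e := e) hφ huv hc hu hv
  have huv_swap : kempeSwap φ a b u ⟨s(u, v), huv⟩ = b := by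
    rw [kempeSwap_of_inKempeChain ((hchain _).mpr rfl), hc, Equiv.swap_apply_left]
  unfold numHighEdges
  refine card_lt_card ((ssubset_iff_of_subset fun e he => ?_).mpr ⟨⟨s(u, v), huv⟩, ?_, ?_⟩)
  · rw [mem_filter] at he ⊢
    by_cases heuv : e = ⟨s(u, v), huv⟩
    · rw [heuv, huv_swap] at he; omega
    · rwa [← kempeSwap_of_not_inKempeChain (mt (hchain e).mp heuv)]
  · simpa [hc] using ha
  · simpa [huv_swap] using hb

open Classical in
theorem numHighEdges_kempeSwap_le (hφ : IsProperEdgeColoring G k φ)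
    (ha : G.maxDegree + 1 ≤ (a : ℕ)) (hb : (b : ℕ) < G.maxDegree + 1)
    (hwa : HasColour φ w a) (hwb : ¬ HasColour φ w b) :
    numHighEdges (kempeSwap φ a b w) ≤ numHighEdges φ := by
  unfold numHighEdges
  set high : Finset G.edgeSet := {e | G.maxDegree + 1 ≤ (φ e : ℕ)}
  set A : Finset G.edgeSet := {e | φ e = a ∧ InKempeChain G φ a b w e}
  set B : Finset G.edgeSet := {e | φ e = b ∧ InKempeChain G φ a b w e}
  have hAB : #B ≤ #A := by convert hφ.card_inKempeChain_le hwa hwb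
  have hA : A ⊆ high := fun e he => by
    simp only [A, high, mem_filter, mem_univ, true_and] at he ⊢
    rw [he.1]; exact ha
  have hsub : ({e | G.maxDegree + 1 ≤ (kempeSwap φ a b w e : ℕ)} : Finset G.edgeSet) ⊆
      (high \ A) ∪ B := fun e he => by
    simp only [A, B, high, mem_union, mem_sdiff, mem_filter, mem_univ, true_and] at he ⊢
    by_cases hchain : InKempeChain G φ a b w e
    · rw [kempeSwap_of_inKempeChain hchain] at he
      rcases hchain.1 with hc | hc
      · rw [hc, Equiv.swap_apply_left] at he; omega
      · exact Or.inr ⟨hc, hchain⟩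
    · rw [kempeSwap_of_not_inKempeChain hchain] at he
      exact Or.inl ⟨he, fun h => hchain h.2⟩
  calc _ ≤ #((high \ A) ∪ B) := card_le_card hsub
    _ ≤ #(high \ A) + #B := card_union_le _ _
    _ = #high - #A + #B := by rw [card_sdiff_of_subset hA]
    _ ≤ #high := by have := card_le_card hA; omega

end HighEdges

section Fan

variable {V : Type*} [Fintype V] {G : SimpleGraph V} [DecidableRel G.Adj] {k : ℕ}
  {φ ψ : G.edgeSet → Fin k} {u : V} {h : Fin k} {v : ℕ → V} {a : ℕ → Fin k} {q : ℕ}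

def KempeReducible (φ : G.edgeSet → Fin k) : Prop :=
  ∃ ψ, KempeEquiv G k φ ψ ∧ numHighEdges ψ < numHighEdges φ

theorem KempeReducible.of_kempeEquiv (hψ : KempeReducible ψ) (h : KempeEquiv G k φ ψ)
    (hle : numHighEdges ψ ≤ numHighEdges φ) : KempeReducible φ := by
  obtain ⟨χ, hχ, hlt⟩ := hψ
  exact ⟨χ, h.trans hχ, hlt.trans_le hle⟩

/-- A Vizing fan at `u` around the high edge `u (v 0)`; the value `a 0` is unused. -/
structure IsFan (φ : G.edgeSet → Fin k) (u : V) (h : Fin k) (v : ℕ → V) (a : ℕ → Fin k)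
    (q : ℕ) : Prop where
  high : G.maxDegree + 1 ≤ (h : ℕ)
  spoke_zero : EdgeHasColour φ u (v 0) h
  spoke : ∀ i, 1 ≤ i → i ≤ q → EdgeHasColour φ u (v i) (a i)
  not_hasColour : ∀ i < q, ¬ HasColour φ (v i) (a (i + 1))
  low : ∀ i, 1 ≤ i → i ≤ q → (a i : ℕ) < G.maxDegree + 1
  injOn : Set.InjOn a (Set.Icc 1 q)

namespace IsFan

theorem of_edgeHasColour {x : V} (hx : EdgeHasColour φ u x h)
    (hh : G.maxDegree + 1 ≤ (h : ℕ)) (a : ℕ → Fin k) : IsFan φ u h (fun _ => x) a 0 where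
  high := hh
  spoke_zero := hx
  spoke _ hi hi0 := absurd (hi.trans hi0) (by omega)
  not_hasColour _ hi := absurd hi (Nat.not_lt_zero _)
  low _ hi hi0 := absurd (hi.trans hi0) (by omega)
  injOn _ hi := absurd (hi.1.trans hi.2) (by omega)

theorem mono (hF : IsFan φ u h v a q) {r : ℕ} (hr : r ≤ q) : IsFan φ u h v a r where
  high := hF.high
  spoke_zero := hF.spoke_zero
  spoke i hi hir := hF.spoke i hi (hir.trans hr)
  not_hasColour i hi := hF.not_hasColour i (hi.trans_le hr)
  low i hi hir := hF.low i hi (hir.trans hr)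
  injOn := hF.injOn.mono (Set.Icc_subset_Icc_right hr)

theorem colour_ne_high (hF : IsFan φ u h v a q) {i : ℕ} (hi : 1 ≤ i) (hiq : i ≤ q) :
    a i ≠ h := by
  intro he
  have := hF.low i hi hiq
  have := hF.high
  rw [he] at *
  omega

theorem colour_ne (hF : IsFan φ u h v a q) {i j : ℕ} (hi : 1 ≤ i) (hiq : i ≤ q)
    (hj : 1 ≤ j) (hjq : j ≤ q) (hij : i ≠ j) : a i ≠ a j :=
  hF.injOn.ne ⟨hi, hiq⟩ ⟨hj, hjq⟩ hij

theorem hasColour (hF : IsFan φ u h v a q) {i : ℕ} (hi : 1 ≤ i) (hiq : i ≤ q) :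
    HasColour φ u (a i) :=
  (hF.spoke i hi hiq).hasColour

theorem ne_of_not_hasColour (hF : IsFan φ u h v a q) {c : Fin k} (hc : ¬ HasColour φ u c)
    {i : ℕ} (hi : 1 ≤ i) (hiq : i ≤ q) : c ≠ a i :=
  fun he => hc (he ▸ hF.hasColour hi hiq)

theorem kempeSwap_succ (hF : IsFan φ u h v a (q + 1)) :
    IsFan (kempeSwap φ h (a 1) (v 0)) u h (fun i => v (i + 1)) (fun i => a (i + 1)) q where
  high := hF.high
  spoke_zero := by
    obtain ⟨hu1, hc1⟩ := hF.spoke 1 le_rfl (by omega)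
    have hchain : InKempeChain G φ h (a 1) (v 0) ⟨s(u, v 1), hu1⟩ :=
      ⟨Or.inr hc1, u, Sym2.mem_mk_left _ _,
        (kempeGraph_adj_iff.mpr (Or.inl hF.spoke_zero.symm)).reachable⟩
    exact ⟨hu1, by rw [kempeSwap_of_inKempeChain hchain, hc1, Equiv.swap_apply_right]⟩
  spoke i hi hiq := by
    obtain ⟨hui, hci⟩ := hF.spoke (i + 1) (by omega) (by omega)
    exact ⟨hui, (kempeSwap_eq_iff_of_ne (hF.colour_ne_high (by omega) (by omega))
      (hF.colour_ne (by omega) (by omega) le_rfl (by omega) (by omega))).mpr hci⟩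
  not_hasColour i hi hc := by
    rcases hc.of_kempeSwap with hc | hc | hc
    · exact hF.colour_ne_high (by omega) (by omega) hc
    · exact hF.colour_ne (by omega) (by omega) le_rfl (by omega) (by omega) hc
    · exact hF.not_hasColour (i + 1) (by omega) hc
  low i hi hiq := hF.low (i + 1) (by omega) (by omega)
  injOn i hi j hj hij := by
    have := hF.injOn (x₁ := i + 1) (x₂ := j + 1) ⟨by omega, by have := hi.2; omega⟩
      ⟨by omega, by have := hj.2; omega⟩ hij
    omega

theorem exists_rotate (hφ : IsProperEdgeColoring G k φ) (hF : IsFan φ u h v a q) :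
    ∃ ψ, KempeEquiv G k φ ψ ∧ numHighEdges ψ ≤ numHighEdges φ ∧
      EdgeHasColour ψ u (v q) h ∧
      ∀ y c, c ≠ h → (∀ i, 1 ≤ i → i ≤ q → c ≠ a i) →
        (HasColour ψ y c ↔ HasColour φ y c) := by
  induction q generalizing φ v a with
  | zero =>
    exact ⟨φ, Relation.ReflTransGen.refl, le_rfl, hF.spoke_zero, fun _ _ _ _ => Iff.rfl⟩
  | succ q ih =>
    obtain ⟨ψ, hψ, hle, hspoke, hcol⟩ := ih (hφ.kempeSwap _ _ _) hF.kempeSwap_succ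
    refine ⟨ψ, Relation.ReflTransGen.head kempeChange_kempeSwap hψ,
      hle.trans (numHighEdges_kempeSwap_le hφ hF.high (hF.low 1 le_rfl (by omega))
        hF.spoke_zero.symm.hasColour (hF.not_hasColour 0 (by omega))), hspoke,
      fun y c hch hca => ?_⟩
    rw [hcol y c hch fun i hi hiq => hca (i + 1) (by omega) (by omega)]
    exact hasColour_kempeSwap_iff_of_ne hch (hca 1 le_rfl (by omega))

theorem kempeReducible_of_not_hasColour (hφ : IsProperEdgeColoring G k φ)
    (hF : IsFan φ u h v a q) {c : Fin k} (hc : (c : ℕ) < G.maxDegree + 1)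
    (hcu : ¬ HasColour φ u c) (hcq : ¬ HasColour φ (v q) c) : KempeReducible φ := by
  obtain ⟨ψ, hψ, hle, ⟨huv, hψuv⟩, hcol⟩ := hF.exists_rotate hφ
  have hch : c ≠ h := fun he => by have := hF.high; rw [he] at hc; omega
  have hca : ∀ i, 1 ≤ i → i ≤ q → c ≠ a i := fun _ => hF.ne_of_not_hasColour hcu
  refine ⟨kempeSwap ψ h c u, hψ.tail kempeChange_kempeSwap, lt_of_lt_of_le ?_ hle⟩
  exact numHighEdges_kempeSwap_lt_of_not_hasColour (hφ.of_kempeEquiv hψ) huv hψuv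
    (fun h' => hcu ((hcol u c hch hca).mp h')) (fun h' => hcq ((hcol _ c hch hca).mp h'))
    hF.high hc

theorem kempeSwap_of_not_reachable (hF : IsFan φ u h v a q) {b c : Fin k} {x : V}
    (hbu : ¬ HasColour φ u b) (hxu : ¬ (kempeGraph G φ b c).Reachable x u)
    (hc : ∀ i < q, a (i + 1) = c → ¬ HasColour (kempeSwap φ b c x) (v i) c) :
    IsFan (kempeSwap φ b c x) u h v a q where
  high := hF.high
  spoke_zero := hF.spoke_zero.kempeSwap_of_not_reachable hxu
  spoke i hi hiq := (hF.spoke i hi hiq).kempeSwap_of_not_reachable hxu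
  not_hasColour i hi hai := by
    by_cases haic : a (i + 1) = c
    · exact hc i hi haic (haic ▸ hai)
    rcases hai.of_kempeSwap with hab | hac | hai
    · exact hF.ne_of_not_hasColour hbu (by omega) (by omega) hab.symm
    · exact haic hac
    · exact hF.not_hasColour i hi hai
  low := hF.low
  injOn := hF.injOn

theorem adj (hF : IsFan φ u h v a q) {i : ℕ} (hiq : i ≤ q) : G.Adj u (v i) := by
  rcases Nat.eq_zero_or_pos i with rfl | hi
  exacts [hF.spoke_zero.1, (hF.spoke i hi hiq).1]

theorem vertex_ne (hF : IsFan φ u h v a q) {i j : ℕ} (hij : i < j) (hjq : j ≤ q) :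
    v i ≠ v j := by
  intro he
  have hj := hF.spoke j (by omega) hjq
  rcases Nat.eq_zero_or_pos i with rfl | hi
  · exact hF.colour_ne_high (by omega) hjq ((he ▸ hF.spoke_zero).unique hj).symm
  · exact hF.colour_ne hi (by omega) (by omega) hjq hij.ne
      ((he ▸ hF.spoke i hi (by omega)).unique hj)

theorem not_reachable_of_reachable (hφ : IsProperEdgeColoring G k φ) (hF : IsFan φ u h v a q)
    {b c : Fin k} {i : ℕ} (hiq : i < q) (hbu : ¬ HasColour φ u b)
    (hic : ¬ HasColour φ (v i) c) (hqc : ¬ HasColour φ (v q) c)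
    (hiu : (kempeGraph G φ b c).Reachable (v i) u) :
    ¬ (kempeGraph G φ b c).Reachable (v q) u := by
  classical
  intro hqu
  have hends := hφ.card_le_two_of_reachable_of_not_hasColour (a := b) (b := c) (w := u)
    (S := {u, v i, v q}) fun x hx => by
      simp only [mem_insert, mem_singleton] at hx
      rcases hx with rfl | rfl | rfl
      exacts [⟨Reachable.refl _, Or.inl hbu⟩, ⟨hiu.symm, Or.inr hic⟩,
        ⟨hqu.symm, Or.inr hqc⟩]
  have hu : u ∉ ({v i, v q} : Finset V) := by
    simp only [mem_insert, mem_singleton, not_or]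
    exact ⟨G.ne_of_adj (hF.adj hiq.le), G.ne_of_adj (hF.adj le_rfl)⟩
  rw [card_insert_of_notMem hu, card_pair (hF.vertex_ne hiq le_rfl)] at hends
  omega

theorem kempeReducible_of_kempeSwap (hφ : IsProperEdgeColoring G k φ) (hF : IsFan φ u h v a q)
    {b c : Fin k} (hb : (b : ℕ) < G.maxDegree + 1) (hc : (c : ℕ) < G.maxDegree + 1)
    (hbc : b ≠ c) (hbu : ¬ HasColour φ u b) (hqc : ¬ HasColour φ (v q) c)
    (hqu : ¬ (kempeGraph G φ b c).Reachable (v q) u)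
    (hmiss : ∀ i < q, a (i + 1) = c → ¬ HasColour (kempeSwap φ b c (v q)) (v i) c) :
    KempeReducible φ := by
  refine KempeReducible.of_kempeEquiv ?_ (.single kempeChange_kempeSwap)
    (numHighEdges_kempeSwap_of_lt (w := v q) hb hc).le
  exact (hF.kempeSwap_of_not_reachable hbu hqu hmiss).kempeReducible_of_not_hasColour
    (hφ.kempeSwap _ _ _) hb ((hasColour_kempeSwap_iff_of_not_reachable hqu).not.mpr hbu)
    (not_hasColour_kempeSwap_self hbc hqc)

theorem kempeReducible_of_not_hasColour_spoke (hk : G.maxDegree + 1 ≤ k)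
    (hφ : IsProperEdgeColoring G k φ) (hF : IsFan φ u h v a q) {s : ℕ} (hs : 1 ≤ s)
    (hsq : s ≤ q) (hqs : ¬ HasColour φ (v q) (a s)) : KempeReducible φ := by
  obtain ⟨b, hb, hbu⟩ := exists_lt_not_hasColour hk φ u
  have hbs : b ≠ a s := hF.ne_of_not_hasColour hbu hs hsq
  have hs' : ¬ HasColour φ (v (s - 1)) (a s) := by
    simpa only [Nat.sub_add_cancel hs] using hF.not_hasColour (s - 1) (by omega)
  have hFs := hF.mono (r := s - 1) (by omega)
  by_cases hbs' : HasColour φ (v (s - 1)) b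
  swap
  · exact hFs.kempeReducible_of_not_hasColour hφ hb hbu hbs'
  by_cases hreach : (kempeGraph G φ b (a s)).Reachable (v (s - 1)) u
  · by_cases hbq : HasColour φ (v q) b
    swap
    · exact hF.kempeReducible_of_not_hasColour hφ hb hbu hbq
    have hqu := hF.not_reachable_of_reachable hφ (by omega) hbu hs' hqs hreach
    refine hF.kempeReducible_of_kempeSwap hφ hb (hF.low s hs hsq) hbs hbu hqs hqu
      fun i hi hai => ?_
    obtain rfl : i = s - 1 := by
      have := hF.injOn ⟨by omega, by omega⟩ ⟨hs, hsq⟩ hai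
      omega
    rwa [hasColour_kempeSwap_iff_of_not_reachable fun h' => hqu (h'.trans hreach)]
  · refine hFs.kempeReducible_of_kempeSwap hφ hb (hF.low s hs hsq) hbs hbu hs' hreach
      fun i hi hai => absurd hai (hF.colour_ne (by omega) (by omega) hs hsq (by omega))

theorem length_le (hF : IsFan φ u h v a q) : q ≤ k := by
  simpa using card_le_card_of_injOn a (s := Finset.Icc 1 q) (t := univ)
    (fun _ _ => mem_coe.mpr (mem_univ _)) (by simpa only [coe_Icc] using hF.injOn)

theorem extend (hF : IsFan φ u h v a q) {x : V} {c : Fin k} (hx : EdgeHasColour φ u x c)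
    (hcq : ¬ HasColour φ (v q) c) (hc : (c : ℕ) < G.maxDegree + 1)
    (hca : ∀ i, 1 ≤ i → i ≤ q → c ≠ a i) :
    IsFan φ u h (Function.update v (q + 1) x) (Function.update a (q + 1) c) (q + 1) where
  high := hF.high
  spoke_zero := by
    rw [Function.update_of_ne (by omega)]
    exact hF.spoke_zero
  spoke i hi hiq := by
    rcases Nat.lt_or_eq_of_le hiq with hiq | rfl
    · rw [Function.update_of_ne (by omega), Function.update_of_ne (by omega)]
      exact hF.spoke i hi (by omega)
    · rw [Function.update_self, Function.update_self]
      exact hx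
  not_hasColour i hi := by
    rw [Function.update_of_ne (by omega)]
    rcases Nat.lt_or_eq_of_le (Nat.lt_succ_iff.mp hi) with hi | rfl
    · rw [Function.update_of_ne (by omega)]
      exact hF.not_hasColour i hi
    · rw [Function.update_self]
      exact hcq
  low i hi hiq := by
    rcases Nat.lt_or_eq_of_le hiq with hiq | rfl
    · rw [Function.update_of_ne (by omega)]
      exact hF.low i hi (by omega)
    · rw [Function.update_self]
      exact hc
  injOn i hi j hj hij := by
    obtain ⟨hi, hiq⟩ := hi
    obtain ⟨hj, hjq⟩ := hj
    simp only [Function.update_apply] at hij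
    split_ifs at hij with hi' hj' hj'
    · omega
    · exact absurd hij (hca j hj (by omega))
    · exact absurd hij.symm (hca i hi (by omega))
    · exact hF.injOn ⟨hi, by omega⟩ ⟨hj, by omega⟩ hij

theorem kempeReducible (hk : G.maxDegree + 1 ≤ k) (hφ : IsProperEdgeColoring G k φ)
    {v : ℕ → V} {a : ℕ → Fin k} {q : ℕ} (hF : IsFan φ u h v a q) :
    KempeReducible φ := by
  obtain ⟨c, hc, hcq⟩ := exists_lt_not_hasColour hk φ (v q)
  by_cases hca : ∃ s, 1 ≤ s ∧ s ≤ q ∧ c = a s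
  · obtain ⟨s, hs, hsq, rfl⟩ := hca
    exact hF.kempeReducible_of_not_hasColour_spoke hk hφ hs hsq hcq
  push Not at hca
  by_cases hcu : HasColour φ u c
  · obtain ⟨x, hx⟩ := hcu
    have hF' := hF.extend hx hcq hc hca
    have := hF'.length_le
    exact hF'.kempeReducible hk hφ
  · exact hF.kempeReducible_of_not_hasColour hφ hc hcu hcq
termination_by k - q

end IsFan

theorem kempeReducible_of_numHighEdges_ne_zero (hk : G.maxDegree + 1 ≤ k)
    (hφ : IsProperEdgeColoring G k φ) (h0 : numHighEdges φ ≠ 0) : KempeReducible φ := by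
  obtain ⟨⟨e, he⟩, hhigh⟩ : ∃ e, G.maxDegree + 1 ≤ (φ e : ℕ) := by
    simpa [numHighEdges_eq_zero_iff] using h0
  induction e using Sym2.ind with
  | h u x =>
    exact (IsFan.of_edgeHasColour ⟨he, rfl⟩ hhigh fun _ => φ ⟨s(u, x), he⟩).kempeReducible
      hk hφ

end Fan

/-- **Lemma.** If `c` is a proper `k`-edge-colouring of `G` with `k ≥ Δ + 1`, then there
is a proper edge-colouring `c'` of `G` using at most `Δ + 1` colours (i.e. only colours
from `{0, …, Δ}`) such that `c` and `c'` are Kempe equivalent as `k`-edge-colourings. -/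
theorem kempe_equiv_to_deltaPlusOne_colouring {V : Type*} [Fintype V]
    (G : SimpleGraph V) [DecidableRel G.Adj] (k : ℕ) (hk : G.maxDegree + 1 ≤ k)
    (c : G.edgeSet → Fin k) (hc : IsProperEdgeColoring G k c) :
    ∃ c' : G.edgeSet → Fin k, IsProperEdgeColoring G k c' ∧
      (∀ e : G.edgeSet, (c' e : ℕ) < G.maxDegree + 1) ∧
      KempeEquiv G k c c' := by
  induction hn : numHighEdges c using Nat.strong_induction_on generalizing c with
  | _ n ih =>
    by_cases h0 : numHighEdges c = 0
    · exact ⟨c, hc, numHighEdges_eq_zero_iff.mp h0, Relation.ReflTransGen.refl⟩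
    obtain ⟨ψ, hψ, hlt⟩ := kempeReducible_of_numHighEdges_ne_zero hk hc h0
    obtain ⟨c', hc', hlow, hψc'⟩ := ih _ (hn ▸ hlt) ψ (hc.of_kempeEquiv hψ) rfl
    exact ⟨c', hc', hlow, hψ.trans hψc'⟩
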